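/- Let $b \geq 0$ and consider $\mathcal{E}_r[U] = \mathcal{E}_r \otimes_{\mathbb{F}_2} \mathbb{F}_2[U]$ with the $b$-truncated differential $\partial^{(b)}$ defined on a degree-$k$ monomial $z_\alpha$ by $\partial^{(b)}(z_\alpha) = U\,\partial(z_\alpha)$ if $k \leq b$ and $\partial^{(b)}(z_\alpha) = \partial(z_\alpha)$ if $k > b$, where $\partial$ is the cube differential. Then $\partial^{(b)}$ squares to zero, and the homology $H_k(\mathcal{E}_r[U], \partial^{(b)})$ in exterior degree $k$ has $\mathbb{F}_2$-dimension $\binom{r-1}{k}$ if $k < b$ and $0$ if $k \geq b$. -/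

import Mathlib

/-- The free `𝔽₂`-module with basis the monomials `z_α U^m`, `α ⊆ {1,…,r}`, `m ≥ 0`:
a model for `𝓔_r[U]`, the exterior algebra on `z_1,…,z_r` over `𝔽₂[U]`. -/
abbrev ExtU (r : ℕ) : Type := (Finset (Fin r) × ℕ) →₀ ZMod 2

/-- The `b`-truncated cube differential on `𝓔_r[U]`: on a monomial `z_α U^m` of exterior
degree `k = |α|` it gives `U ∂(z_α) U^m` if `k ≤ b` and `∂(z_α) U^m` if `k > b`, where
`∂` is the cube differential. -/
noncomputable def truncDiff (r b : ℕ) : ExtU r →ₗ[ZMod 2] ExtU r :=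
  Finsupp.lsum (ZMod 2) fun p =>
    LinearMap.toSpanSingleton (ZMod 2) (ExtU r)
      (∑ i ∈ p.1, Finsupp.single (p.1.erase i, p.2 + if p.1.card ≤ b then 1 else 0) 1)

/-- The exterior-degree-`k` part of `𝓔_r[U]`. -/
noncomputable def extDeg (r : ℕ) (k : ℕ) : Submodule (ZMod 2) (ExtU r) :=
  Finsupp.supported (ZMod 2) (ZMod 2) {p : Finset (Fin r) × ℕ | p.1.card = k}

/-- The cycles in exterior degree `k`. -/
noncomputable def cycles (r b k : ℕ) : Submodule (ZMod 2) (ExtU r) :=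
  extDeg r k ⊓ LinearMap.ker (truncDiff r b)

/-- The boundaries coming from exterior degree `k+1`, viewed inside the cycles. -/
noncomputable def bdries (r b k : ℕ) : Submodule (ZMod 2) ↥(cycles r b k) :=
  Submodule.comap (cycles r b k).subtype
    (Submodule.map (truncDiff r b) (extDeg r (k + 1)))

namespace Stmt12

open Finsupp LinearMap

/-- plain cube differential (no `U`). -/
noncomputable def Dm (r : ℕ) : ExtU r →ₗ[ZMod 2] ExtU r :=
  Finsupp.lsum (ZMod 2) fun p =>
    LinearMap.toSpanSingleton (ZMod 2) (ExtU r)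
      (∑ i ∈ p.1, Finsupp.single (p.1.erase i, p.2) 1)

/-- multiplication by U -/
noncomputable def Um (r : ℕ) : ExtU r →ₗ[ZMod 2] ExtU r :=
  Finsupp.lmapDomain (ZMod 2) (ZMod 2) (fun p => (p.1, p.2 + 1))

/-- division by U (kills U⁰ part) -/
noncomputable def Sm (r : ℕ) : ExtU r →ₗ[ZMod 2] ExtU r :=
  Finsupp.lsum (ZMod 2) fun p =>
    LinearMap.toSpanSingleton (ZMod 2) (ExtU r)
      (match p.2 with
       | 0 => 0
       | m + 1 => Finsupp.single (p.1, m) 1)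

/-- homotopy: multiplication by z_{i0} -/
noncomputable def hm (r : ℕ) (i0 : Fin r) : ExtU r →ₗ[ZMod 2] ExtU r :=
  Finsupp.lsum (ZMod 2) fun p =>
    LinearMap.toSpanSingleton (ZMod 2) (ExtU r)
      (if i0 ∈ p.1 then 0 else Finsupp.single (insert i0 p.1, p.2) 1)

variable {r b k : ℕ}

lemma Dm_single (p : Finset (Fin r) × ℕ) (c : ZMod 2) :
    Dm r (Finsupp.single p c) = c • ∑ i ∈ p.1, Finsupp.single (p.1.erase i, p.2) (1 : ZMod 2) := by
  simp [Dm, Finsupp.lsum_single, LinearMap.toSpanSingleton_apply]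

lemma Um_single (p : Finset (Fin r) × ℕ) (c : ZMod 2) :
    Um r (Finsupp.single p c) = Finsupp.single (p.1, p.2 + 1) c := by
  simp [Um, Finsupp.lmapDomain_apply, Finsupp.mapDomain_single]

lemma Sm_single_zero (α : Finset (Fin r)) (c : ZMod 2) :
    Sm r (Finsupp.single (α, 0) c) = 0 := by
  simp [Sm, Finsupp.lsum_single, LinearMap.toSpanSingleton_apply]

lemma Sm_single_succ (α : Finset (Fin r)) (m : ℕ) (c : ZMod 2) :
    Sm r (Finsupp.single (α, m + 1) c) = Finsupp.single (α, m) c := by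
  simp [Sm, Finsupp.lsum_single, LinearMap.toSpanSingleton_apply, Finsupp.smul_single]

lemma hm_single_mem (i0 : Fin r) (p : Finset (Fin r) × ℕ) (c : ZMod 2) (h : i0 ∈ p.1) :
    hm r i0 (Finsupp.single p c) = 0 := by
  simp [hm, Finsupp.lsum_single, LinearMap.toSpanSingleton_apply, h]

lemma hm_single_not_mem (i0 : Fin r) (p : Finset (Fin r) × ℕ) (c : ZMod 2) (h : i0 ∉ p.1) :
    hm r i0 (Finsupp.single p c) = Finsupp.single (insert i0 p.1, p.2) c := by
  simp [hm, Finsupp.lsum_single, LinearMap.toSpanSingleton_apply, h, Finsupp.smul_single]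

lemma truncDiff_single (p : Finset (Fin r) × ℕ) (c : ZMod 2) :
    truncDiff r b (Finsupp.single p c) =
      c • ∑ i ∈ p.1, Finsupp.single (p.1.erase i, p.2 + if p.1.card ≤ b then 1 else 0) (1 : ZMod 2) := by
  simp [truncDiff, Finsupp.lsum_single, LinearMap.toSpanSingleton_apply]

lemma add_self (x : ExtU r) : x + x = 0 := by
  have : (2 : ZMod 2) • x = x + x := two_smul _ x
  rw [← this]
  have h2 : (2 : ZMod 2) = 0 := rfl
  rw [h2, zero_smul]

variable {N : Type*} [AddCommMonoid N] [Module (ZMod 2) N]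

/-- two linear maps agreeing on basis monomials of a supported submodule agree on it -/
lemma eq_on_supported {s : Set (Finset (Fin r) × ℕ)} {F G : ExtU r →ₗ[ZMod 2] N}
    (h : ∀ p ∈ s, F (Finsupp.single p 1) = G (Finsupp.single p 1))
    {x : ExtU r} (hx : x ∈ Finsupp.supported (ZMod 2) (ZMod 2) s) : F x = G x := by
  rw [Finsupp.supported_eq_span_single] at hx
  induction hx using Submodule.span_induction with
  | mem x hx => obtain ⟨p, hp, rfl⟩ := hx; exact h p hp
  | zero => simp
  | add x y _ _ hx hy => simp [hx, hy]
  | smul a x _ hx => simp [hx]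

lemma map_supported {s t : Set (Finset (Fin r) × ℕ)} {F : ExtU r →ₗ[ZMod 2] ExtU r}
    (h : ∀ p ∈ s, F (Finsupp.single p 1) ∈ Finsupp.supported (ZMod 2) (ZMod 2) t)
    {x : ExtU r} (hx : x ∈ Finsupp.supported (ZMod 2) (ZMod 2) s) :
    F x ∈ Finsupp.supported (ZMod 2) (ZMod 2) t := by
  rw [Finsupp.supported_eq_span_single] at hx
  induction hx using Submodule.span_induction with
  | mem x hx => obtain ⟨p, hp, rfl⟩ := hx; exact h p hp
  | zero => simp
  | add x y _ _ hx hy => rw [map_add]; exact Submodule.add_mem _ hx hy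
  | smul a x _ hx => rw [map_smul]; exact Submodule.smul_mem _ _ hx

lemma single_smul_one (p : Finset (Fin r) × ℕ) (c : ZMod 2) :
    Finsupp.single p c = c • Finsupp.single p (1 : ZMod 2) := by
  rw [Finsupp.smul_single, smul_eq_mul, mul_one]

lemma Um_inj : Function.Injective (Um r) := by
  apply Finsupp.mapDomain_injective
  intro p q h
  simp only [Prod.mk.injEq, Nat.add_right_cancel_iff] at h
  exact Prod.ext h.1 h.2

lemma Dm_Um_comm : (Dm r).comp (Um r) = (Um r).comp (Dm r) := by
  apply Finsupp.lhom_ext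
  intro p c
  simp only [LinearMap.comp_apply, Um_single, Dm_single, map_smul, map_sum, Um_single]

lemma Dm_Dm : (Dm r).comp (Dm r) = 0 := by
  apply Finsupp.lhom_ext
  intro p c
  obtain ⟨α, m⟩ := p
  simp only [LinearMap.comp_apply, Dm_single, map_smul, map_sum, LinearMap.zero_apply, one_smul]
  rw [smul_eq_zero_of_right]
  have key : ∀ i ∈ α, (∑ j ∈ α.erase i, (Finsupp.single ((α.erase i).erase j, m) (1 : ZMod 2))) =
      ∑ j ∈ α, if j = i then 0 else Finsupp.single ((α.erase i).erase j, m) (1 : ZMod 2) := by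
    intro i hi
    rw [← Finset.sum_erase (a := i) α (f := fun j => if j = i then 0 else Finsupp.single ((α.erase i).erase j, m) (1 : ZMod 2)) (by simp)]
    apply Finset.sum_congr rfl
    intro j hj
    rw [if_neg (Finset.ne_of_mem_erase hj)]
  rw [Finset.sum_congr rfl key, ← Finset.sum_product']
  apply Finset.sum_involution (fun p _ => p.swap)
  · intro a ha
    by_cases hd : a.2 = a.1
    · simp [hd]
    · have hec : (α.erase a.1).erase a.2 = (α.erase a.2).erase a.1 := by
        ext x; simp only [Finset.mem_erase]; tauto
      rw [if_neg hd, Prod.fst_swap, Prod.snd_swap, if_neg (Ne.symm hd), hec]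
      exact add_self _
  · intro a ha hne
    intro hsw
    apply hne
    have : a.2 = a.1 := by
      have := congrArg Prod.fst hsw
      simpa using this
    simp [this]
  · intro a ha
    rfl
  · intro a ha
    simp only [Finset.mem_product] at ha ⊢
    exact ⟨ha.2, ha.1⟩

lemma trunc_single_eq (p : Finset (Fin r) × ℕ) (c : ZMod 2) :
    truncDiff r b (Finsupp.single p c) =
      if p.1.card ≤ b then Um r (Dm r (Finsupp.single p c)) else Dm r (Finsupp.single p c) := by
  rw [truncDiff_single, Dm_single]
  by_cases h : p.1.card ≤ b
  · simp only [h, if_true, map_smul, map_sum, Um_single]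
  · simp only [h, if_false, add_zero]

lemma trunc_eq_on {x : ExtU r} (hx : x ∈ extDeg r k) :
    truncDiff r b x = if k ≤ b then Um r (Dm r x) else Dm r x := by
  have : truncDiff r b x =
      (if k ≤ b then (Um r).comp (Dm r) else Dm r) x := by
    refine eq_on_supported (fun p hp => ?_) hx
    have hc : p.1.card = k := hp
    rw [trunc_single_eq, hc]
    by_cases h : k ≤ b <;> simp [h]
  rw [this]
  by_cases h : k ≤ b <;> simp [h]

lemma homotopy (i0 : Fin r) :
    (Dm r).comp (hm r i0) + (hm r i0).comp (Dm r) = LinearMap.id := by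
  apply Finsupp.lhom_ext
  intro p c
  obtain ⟨α, m⟩ := p
  simp only [LinearMap.add_apply, LinearMap.comp_apply, LinearMap.id_apply]
  by_cases h : i0 ∈ α
  · rw [hm_single_mem i0 (α, m) c h, map_zero, zero_add, Dm_single, map_smul, map_sum]
    have key : ∀ i ∈ α, hm r i0 (Finsupp.single (α.erase i, m) (1 : ZMod 2)) =
        if i0 = i then Finsupp.single (α, m) (1 : ZMod 2) else 0 := by
      intro i hi
      by_cases hii : i0 = i
      · subst hii
        rw [if_pos rfl, hm_single_not_mem i0 (α.erase i0, m) 1 (Finset.notMem_erase _ _)]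
        simp [Finset.insert_erase h]
      · rw [if_neg hii, hm_single_mem]
        exact Finset.mem_erase.mpr ⟨hii, h⟩
    rw [Finset.sum_congr rfl key, Finset.sum_ite_eq, if_pos h, ← single_smul_one]
  · rw [hm_single_not_mem i0 (α, m) c h, Dm_single]
    simp only [Finset.sum_insert (s := α) (a := i0) h]
    rw [Finset.erase_insert h, Dm_single, map_smul, map_sum]
    have key : ∀ i ∈ α, hm r i0 (Finsupp.single (α.erase i, m) (1 : ZMod 2)) =
        Finsupp.single (insert i0 (α.erase i), m) (1 : ZMod 2) := by
      intro i hi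
      exact hm_single_not_mem i0 (α.erase i, m) 1 (fun hmem => h (Finset.mem_of_mem_erase hmem))
    have key2 : ∀ i ∈ α, ((insert i0 α).erase i, m) = (insert i0 (α.erase i), m) := by
      intro i hi
      have : i0 ≠ i := fun he => h (he ▸ hi)
      rw [Finset.erase_insert_of_ne this]
    rw [Finset.sum_congr rfl key, Finset.sum_congr rfl (fun i hi => by rw [key2 i hi])]
    rw [smul_add, add_assoc, add_self, add_zero, ← single_smul_one]


lemma Dm_sq (x : ExtU r) : Dm r (Dm r x) = 0 := by
  have := Dm_Dm (r := r)
  calc Dm r (Dm r x) = ((Dm r).comp (Dm r)) x := rfl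
    _ = 0 := by rw [this]; rfl

lemma single_mem_extDeg {p : Finset (Fin r) × ℕ} (h : p.1.card = k) (c : ZMod 2) :
    Finsupp.single p c ∈ extDeg r k :=
  Finsupp.single_mem_supported _ _ h

lemma Dm_single_mem (p : Finset (Fin r) × ℕ) (c : ZMod 2) :
    Dm r (Finsupp.single p c) ∈ extDeg r (p.1.card - 1) := by
  rw [Dm_single]
  refine Submodule.smul_mem _ _ (Submodule.sum_mem _ fun i hi => ?_)
  exact single_mem_extDeg (by rw [Finset.card_erase_of_mem hi]) 1

lemma Dm_mem_extDeg {x : ExtU r} (hx : x ∈ extDeg r (k + 1)) : Dm r x ∈ extDeg r k := by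
  refine map_supported (fun p hp => ?_) hx
  have hc : p.1.card = k + 1 := hp
  have := Dm_single_mem (r := r) p 1
  rwa [hc, Nat.add_sub_cancel] at this

lemma trunc_single_mem (p : Finset (Fin r) × ℕ) (c : ZMod 2) :
    truncDiff r b (Finsupp.single p c) ∈ extDeg r (p.1.card - 1) := by
  rw [trunc_single_eq]
  by_cases h : p.1.card ≤ b
  · rw [if_pos h, Dm_single]
    simp only [map_smul, map_sum, Um_single]
    refine Submodule.smul_mem _ _ (Submodule.sum_mem _ fun i hi => ?_)
    exact single_mem_extDeg (by rw [Finset.card_erase_of_mem hi]) 1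
  · rw [if_neg h]; exact Dm_single_mem p c

lemma trunc_sq : (truncDiff r b).comp (truncDiff r b) = 0 := by
  apply Finsupp.lhom_ext
  intro p c
  simp only [LinearMap.comp_apply, LinearMap.zero_apply]
  rw [trunc_eq_on (k := p.1.card - 1) (trunc_single_mem p c), trunc_single_eq]
  have hDU : ∀ y : ExtU r, Dm r (Um r y) = Um r (Dm r y) := by
    intro y
    calc Dm r (Um r y) = ((Dm r).comp (Um r)) y := rfl
      _ = ((Um r).comp (Dm r)) y := by rw [Dm_Um_comm]
      _ = Um r (Dm r y) := rfl
  have hz : Dm r (if p.1.card ≤ b then Um r (Dm r (Finsupp.single p c))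
      else Dm r (Finsupp.single p c)) = 0 := by
    by_cases h : p.1.card ≤ b
    · rw [if_pos h, hDU, Dm_sq, map_zero]
    · rw [if_neg h, Dm_sq]
  rw [hz]
  by_cases h : p.1.card - 1 ≤ b <;> simp [h]


lemma homotopy_apply (i0 : Fin r) (x : ExtU r) :
    Dm r (hm r i0 x) + hm r i0 (Dm r x) = x := by
  have := homotopy (r := r) i0
  calc Dm r (hm r i0 x) + hm r i0 (Dm r x)
      = ((Dm r).comp (hm r i0) + (hm r i0).comp (Dm r)) x := rfl
    _ = LinearMap.id (R := ZMod 2) (M := ExtU r) x := by rw [this]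
    _ = x := rfl

lemma hm_mem_extDeg (i0 : Fin r) {x : ExtU r} (hx : x ∈ extDeg r k) :
    hm r i0 x ∈ extDeg r (k + 1) := by
  refine map_supported (fun p hp => ?_) hx
  have hc : p.1.card = k := hp
  by_cases h : i0 ∈ p.1
  · rw [hm_single_mem i0 p 1 h]; exact Submodule.zero_mem _
  · rw [hm_single_not_mem i0 p 1 h]
    exact single_mem_extDeg (by rw [Finset.card_insert_of_notMem h, hc]) 1

lemma hm_zero_on (i0 : Fin r) {x : ExtU r}
    (hx : x ∈ Finsupp.supported (ZMod 2) (ZMod 2) {p : Finset (Fin r) × ℕ | i0 ∈ p.1}) :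
    hm r i0 x = 0 := by
  have : hm r i0 x = (0 : ExtU r →ₗ[ZMod 2] ExtU r) x :=
    eq_on_supported (fun p hp => by rw [hm_single_mem i0 p 1 hp]; rfl) hx
  simpa using this

lemma cycles_D_zero {x : ExtU r} (hx : x ∈ cycles r b k) : Dm r x = 0 := by
  obtain ⟨hdeg, hker⟩ := hx
  have h0 : truncDiff r b x = 0 := hker
  rw [trunc_eq_on hdeg] at h0
  by_cases h : k ≤ b
  · rw [if_pos h] at h0
    exact Um_inj (by rw [h0, map_zero])
  · rwa [if_neg h] at h0

lemma cycles_eq_D_h (i0 : Fin r) {x : ExtU r} (hx : x ∈ cycles r b k) :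
    Dm r (hm r i0 x) = x := by
  have := homotopy_apply i0 x
  rwa [cycles_D_zero hx, map_zero, add_zero] at this

/-- target of the `U⁰`,`z_{i0}`-free coefficient extraction -/
abbrev Sig (r k : ℕ) (i0 : Fin r) : Type := {s : Finset (Fin r) // s.card = k ∧ i0 ∉ s}

noncomputable def Phi (r k : ℕ) (i0 : Fin r) : ExtU r →ₗ[ZMod 2] (Sig r k i0 →₀ ZMod 2) :=
  Finsupp.lsum (ZMod 2) fun p =>
    LinearMap.toSpanSingleton (ZMod 2) _
      (if hp : p.2 = 0 ∧ p.1.card = k ∧ i0 ∉ p.1 then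
        Finsupp.single (⟨p.1, hp.2⟩ : Sig r k i0) (1 : ZMod 2) else 0)

lemma Phi_single (i0 : Fin r) (p : Finset (Fin r) × ℕ) (c : ZMod 2) :
    Phi r k i0 (Finsupp.single p c) =
      if hp : p.2 = 0 ∧ p.1.card = k ∧ i0 ∉ p.1 then
        Finsupp.single (⟨p.1, hp.2⟩ : Sig r k i0) c else 0 := by
  rw [Phi, Finsupp.lsum_single, LinearMap.toSpanSingleton_apply]
  by_cases hp : p.2 = 0 ∧ p.1.card = k ∧ i0 ∉ p.1
  · rw [dif_pos hp, dif_pos hp, Finsupp.smul_single, smul_eq_mul, mul_one]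
  · rw [dif_neg hp, dif_neg hp, smul_zero]

lemma Phi_apply (i0 : Fin r) (x : ExtU r) (β : Finset (Fin r)) (hβ : β.card = k ∧ i0 ∉ β) :
    Phi r k i0 x ⟨β, hβ⟩ = x (β, 0) := by
  induction x using Finsupp.induction_linear with
  | zero => simp
  | add f g hf hg => simp [hf, hg]
  | single p c =>
    rw [Phi_single]
    by_cases hp : p.2 = 0 ∧ p.1.card = k ∧ i0 ∉ p.1
    · rw [dif_pos hp]
      by_cases hpe : p = (β, 0)
      · subst hpe
        rw [Finsupp.single_apply, Finsupp.single_apply, if_pos rfl, if_pos rfl]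
      · have h1 : p.1 ≠ β := by
          intro h
          exact hpe (Prod.ext h hp.1)
        rw [Finsupp.single_apply, Finsupp.single_apply, if_neg (fun h => h1 (congrArg Subtype.val h)),
          if_neg hpe]
    · rw [dif_neg hp, Finsupp.single_apply,
        if_neg (fun h => hp (by rw [h]; exact ⟨rfl, hβ⟩)), Finsupp.coe_zero, Pi.zero_apply]

lemma Phi_Um (i0 : Fin r) (x : ExtU r) : Phi r k i0 (Um r x) = 0 := by
  have : (Phi r k i0).comp (Um r) = 0 := by
    apply Finsupp.lhom_ext
    intro p c
    simp only [LinearMap.comp_apply, Um_single, LinearMap.zero_apply, Phi_single]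
    rw [dif_neg (by simp)]
  calc Phi r k i0 (Um r x) = ((Phi r k i0).comp (Um r)) x := rfl
    _ = 0 := by rw [this]; rfl


lemma Um_mem_pos (x : ExtU r) :
    Um r x ∈ Finsupp.supported (ZMod 2) (ZMod 2) {p : Finset (Fin r) × ℕ | p.2 ≠ 0} := by
  refine map_supported (s := Set.univ) (fun p _ => ?_) (by rw [Finsupp.supported_univ]; trivial)
  rw [Um_single]
  exact Finsupp.single_mem_supported _ _ (by simp)

lemma supported_m_disj {x : ExtU r}
    (h0 : x ∈ Finsupp.supported (ZMod 2) (ZMod 2) {p : Finset (Fin r) × ℕ | p.2 = 0})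
    (h1 : x ∈ Finsupp.supported (ZMod 2) (ZMod 2) {p : Finset (Fin r) × ℕ | p.2 ≠ 0}) :
    x = 0 := by
  rw [Finsupp.mem_supported'] at h0 h1
  ext p
  by_cases h : p.2 = 0
  · exact h1 p (by simp [h])
  · exact h0 p h

/-- `x + U S x` (= the `U⁰`-part of `x`) for `x` supported on `T` is supported on
monomials containing `i0` with `m = 0`. -/
lemma m0_part_supported (i0 : Fin r) {x : ExtU r}
    (hx : x ∈ Finsupp.supported (ZMod 2) (ZMod 2)
      {p : Finset (Fin r) × ℕ | p.1.card = k ∧ (p.2 = 0 → i0 ∈ p.1)}) :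
    x + Um r (Sm r x) ∈ Finsupp.supported (ZMod 2) (ZMod 2)
      {p : Finset (Fin r) × ℕ | (i0 ∈ p.1 ∧ p.1.card = k) ∧ p.2 = 0} := by
  have : x + Um r (Sm r x) =
      (LinearMap.id (R := ZMod 2) (M := ExtU r) + (Um r).comp (Sm r)) x := by simp
  rw [this]
  refine map_supported (fun p hp => ?_) hx
  obtain ⟨α, m⟩ := p
  obtain ⟨hcard, hz⟩ := hp
  match m with
  | 0 =>
    simp only [LinearMap.add_apply, LinearMap.id_apply, LinearMap.comp_apply,
      Sm_single_zero, map_zero, add_zero]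
    exact Finsupp.single_mem_supported _ _ ⟨⟨hz rfl, hcard⟩, rfl⟩
  | Nat.succ m =>
    simp only [LinearMap.add_apply, LinearMap.id_apply, LinearMap.comp_apply,
      Sm_single_succ, Um_single]
    rw [add_self]
    exact Submodule.zero_mem _

lemma Sm_mem_extDeg {x : ExtU r}
    (hx : x ∈ Finsupp.supported (ZMod 2) (ZMod 2)
      {p : Finset (Fin r) × ℕ | p.1.card = k ∧ (p.2 = 0 → i0 ∈ p.1)}) :
    Sm r x ∈ extDeg r k := by
  refine map_supported (fun p hp => ?_) hx
  obtain ⟨α, m⟩ := p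
  match m with
  | 0 => rw [Sm_single_zero]; exact Submodule.zero_mem _
  | Nat.succ m => rw [Sm_single_succ]; exact single_mem_extDeg (p := (α, m)) hp.1 1

lemma Dm_keeps_m0 {x : ExtU r}
    (hx : x ∈ Finsupp.supported (ZMod 2) (ZMod 2)
      {p : Finset (Fin r) × ℕ | (i0 ∈ p.1 ∧ p.1.card = k) ∧ p.2 = 0}) :
    Dm r x ∈ Finsupp.supported (ZMod 2) (ZMod 2) {p : Finset (Fin r) × ℕ | p.2 = 0} := by
  refine map_supported (fun p hp => ?_) hx
  rw [Dm_single]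
  refine Submodule.smul_mem _ _ (Submodule.sum_mem _ fun i hi => ?_)
  exact Finsupp.single_mem_supported _ _ hp.2

/-- Core divisibility: a cycle `x` (in the `Dm` sense) of degree `k` with vanishing
`Φ` is `U` times a cycle of degree `k`. -/
lemma cycle_div_U (i0 : Fin r) {x : ExtU r} (hdeg : x ∈ extDeg r k)
    (hD : Dm r x = 0) (hPhi : Phi r k i0 x = 0) :
    x = Um r (Sm r x) ∧ Sm r x ∈ extDeg r k ∧ Dm r (Sm r x) = 0 := by
  -- x is supported on T
  have hT : x ∈ Finsupp.supported (ZMod 2) (ZMod 2)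
      {p : Finset (Fin r) × ℕ | p.1.card = k ∧ (p.2 = 0 → i0 ∈ p.1)} := by
    rw [Finsupp.mem_supported']
    intro p hp
    simp only [Set.mem_setOf_eq, not_and, not_forall] at hp
    by_cases hc : p.1.card = k
    · obtain ⟨h0, hni⟩ := hp hc
      have := Phi_apply i0 x p.1 ⟨hc, hni⟩
      rw [hPhi] at this
      simp only [Finsupp.coe_zero, Pi.zero_apply] at this
      rw [← h0] at this
      exact this.symm
    · exact (Finsupp.mem_supported' _ _).mp hdeg p hc
  set x0 := x + Um r (Sm r x) with hx0
  have hx0supp := m0_part_supported i0 hT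
  have hxeq : x = x0 + Um r (Sm r x) := by
    rw [hx0, add_assoc, add_self, add_zero]
  have hSdeg : Sm r x ∈ extDeg r k := Sm_mem_extDeg hT
  -- D x0 = U (D (S x)), supported both on m=0 and m≠0, hence 0
  have hDx0 : Dm r x0 = Um r (Dm r (Sm r x)) := by
    have : Dm r x = Dm r x0 + Dm r (Um r (Sm r x)) := by rw [← map_add, ← hxeq]
    rw [hD] at this
    have h2 : Dm r x0 = Dm r (Um r (Sm r x)) := by
      rw [← zero_add (Dm r (Um r (Sm r x))), this, add_assoc, add_self, add_zero]
    rw [h2]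
    calc Dm r (Um r (Sm r x)) = ((Dm r).comp (Um r)) (Sm r x) := rfl
      _ = ((Um r).comp (Dm r)) (Sm r x) := by rw [Dm_Um_comm]
      _ = Um r (Dm r (Sm r x)) := rfl
  have hDx0zero : Dm r x0 = 0 := by
    refine supported_m_disj (Dm_keeps_m0 (i0 := i0) hx0supp) ?_
    rw [hDx0]
    exact Um_mem_pos _
  have hDS : Dm r (Sm r x) = 0 := Um_inj (by rw [← hDx0, hDx0zero, map_zero])
  -- x0 is a cycle supported on monomials containing i0, hence 0
  have hx0zero : x0 = 0 := by
    have hh : hm r i0 x0 = 0 := by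
      refine hm_zero_on i0 (Finsupp.supported_mono (fun p hp => hp.1.1) hx0supp)
    have := homotopy_apply i0 x0
    rw [hh, map_zero, zero_add, hDx0zero, map_zero] at this
    exact this.symm
  rw [hx0zero, zero_add] at hxeq
  exact ⟨hxeq, hSdeg, hDS⟩


lemma gen_cycle (i0 : Fin r) (β : Finset (Fin r)) (hβ : β.card = k ∧ i0 ∉ β) :
    Dm r (Finsupp.single (insert i0 β, 0) (1 : ZMod 2)) ∈ cycles r b k ∧
      Phi r k i0 (Dm r (Finsupp.single (insert i0 β, 0) (1 : ZMod 2))) =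
        Finsupp.single (⟨β, hβ⟩ : Sig r k i0) 1 := by
  have hcard : (insert i0 β).card = k + 1 := by
    rw [Finset.card_insert_of_notMem hβ.2, hβ.1]
  have hdeg : Dm r (Finsupp.single (insert i0 β, 0) (1 : ZMod 2)) ∈ extDeg r k := by
    have := Dm_single_mem (r := r) (insert i0 β, 0) 1
    simpa [hcard] using this
  have hD : Dm r (Dm r (Finsupp.single (insert i0 β, 0) (1 : ZMod 2))) = 0 := Dm_sq _
  constructor
  · refine ⟨hdeg, ?_⟩
    rw [SetLike.mem_coe, LinearMap.mem_ker, trunc_eq_on hdeg]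
    by_cases h : k ≤ b <;> simp [h, hD]
  · rw [Dm_single, one_smul, map_sum, Finset.sum_insert (s := β) (a := i0) hβ.2]
    have h1 : Phi r k i0 (Finsupp.single ((insert i0 β).erase i0, 0) (1 : ZMod 2)) =
        Finsupp.single (⟨β, hβ⟩ : Sig r k i0) 1 := by
      rw [Finset.erase_insert hβ.2, Phi_single, dif_pos ⟨rfl, hβ⟩]
    have h2 : ∀ i ∈ β, Phi r k i0 (Finsupp.single ((insert i0 β).erase i, 0) (1 : ZMod 2)) = 0 := by
      intro i hi
      rw [Phi_single, dif_neg]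
      rintro ⟨-, -, hni⟩
      exact hni (Finset.mem_erase.mpr ⟨fun he => hβ.2 (he ▸ hi), Finset.mem_insert_self _ _⟩)
    rw [h1, Finset.sum_congr rfl h2, Finset.sum_const_zero, add_zero]

lemma bdries_eq_top (hbk : b ≤ k) (i0 : Fin r) : bdries r b k = ⊤ := by
  rw [bdries, Submodule.comap_subtype_eq_top]
  intro x hx
  have hdeg1 : hm r i0 x ∈ extDeg r (k + 1) := hm_mem_extDeg i0 hx.1
  refine Submodule.mem_map.mpr ⟨hm r i0 x, hdeg1, ?_⟩
  rw [trunc_eq_on hdeg1, if_neg (show ¬ (k + 1 ≤ b) by omega)]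
  exact cycles_eq_D_h i0 hx

lemma ker_eq_bdries (hkb : k < b) (i0 : Fin r) :
    LinearMap.ker ((Phi r k i0).comp (cycles r b k).subtype) = bdries r b k := by
  ext ⟨x, hx⟩
  rw [LinearMap.mem_ker, LinearMap.comp_apply]
  change Phi r k i0 x = 0 ↔ _
  rw [bdries, Submodule.mem_comap]
  change _ ↔ x ∈ Submodule.map (truncDiff r b) (extDeg r (k + 1))
  constructor
  · intro hPhi
    obtain ⟨hxU, hSdeg, hSD⟩ := cycle_div_U i0 hx.1 (cycles_D_zero hx) hPhi
    set y := Sm r x with hy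
    have hycyc : y ∈ cycles r b k := by
      refine ⟨hSdeg, ?_⟩
      rw [SetLike.mem_coe, LinearMap.mem_ker, trunc_eq_on hSdeg]
      by_cases h : k ≤ b <;> simp [h, hSD]
    refine Submodule.mem_map.mpr ⟨hm r i0 y, hm_mem_extDeg i0 hSdeg, ?_⟩
    rw [trunc_eq_on (hm_mem_extDeg i0 hSdeg), if_pos (show k + 1 ≤ b by omega), cycles_eq_D_h i0 hycyc]
    exact hxU.symm
  · rintro ⟨z, hz, rfl⟩
    rw [trunc_eq_on hz, if_pos (show k + 1 ≤ b by omega)]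
    exact Phi_Um i0 _

lemma Phi_comp_surj (hkb : k < b) (i0 : Fin r) :
    Function.Surjective ((Phi r k i0).comp (cycles r b k).subtype) := by
  intro w
  induction w using Finsupp.induction_linear with
  | zero => exact ⟨0, by simp⟩
  | add f g hf hg =>
    obtain ⟨u, hu⟩ := hf
    obtain ⟨v, hv⟩ := hg
    exact ⟨u + v, by rw [map_add, hu, hv]⟩
  | single a c =>
    obtain ⟨β, hβ⟩ := a
    obtain ⟨hcyc, hPhi⟩ := gen_cycle (b := b) i0 β hβ
    refine ⟨c • ⟨_, hcyc⟩, ?_⟩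
    rw [map_smul, LinearMap.comp_apply]
    show c • Phi r k i0 (Dm r (Finsupp.single (insert i0 β, 0) (1 : ZMod 2))) = _
    rw [hPhi, Finsupp.smul_single, smul_eq_mul, mul_one]

lemma card_sig (hr : 1 ≤ r) (i0 : Fin r) :
    Fintype.card (Sig r k i0) = (r - 1).choose k := by
  rw [Fintype.card_subtype]
  have he : Finset.filter (fun s => s.card = k ∧ i0 ∉ s) Finset.univ =
      Finset.powersetCard k ((Finset.univ : Finset (Fin r)).erase i0) := by
    ext s
    simp only [Finset.mem_filter, Finset.mem_univ, true_and, Finset.mem_powersetCard,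
      Finset.subset_erase, Finset.subset_univ, true_and]
    tauto
  rw [he, Finset.card_powersetCard, Finset.card_erase_of_mem (Finset.mem_univ _),
    Finset.card_univ, Fintype.card_fin]

end Stmt12

/-- The `b`-truncated differential `∂^{(b)}` squares to zero, and its homology in exterior
degree `k` has `𝔽₂`-dimension `C(r-1,k)` for `k < b` and `0` for `k ≥ b`. -/
theorem stmt12 (r b k : ℕ) (hr : 1 ≤ r) :
    (truncDiff r b).comp (truncDiff r b) = 0 ∧
      Module.finrank (ZMod 2) (↥(cycles r b k) ⧸ bdries r b k) =
        if k < b then (r - 1).choose k else 0 := by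
  refine ⟨Stmt12.trunc_sq, ?_⟩
  have i0 : Fin r := ⟨0, hr⟩
  by_cases hkb : k < b
  · rw [if_pos hkb]
    have hker := Stmt12.ker_eq_bdries (r := r) hkb i0
    have e : (↥(cycles r b k) ⧸ bdries r b k) ≃ₗ[ZMod 2] (Stmt12.Sig r k i0 →₀ ZMod 2) :=
      (Submodule.quotEquivOfEq _ _ hker.symm).trans
        (LinearMap.quotKerEquivOfSurjective _ (Stmt12.Phi_comp_surj hkb i0))
    rw [e.finrank_eq,
      (Finsupp.linearEquivFunOnFinite (ZMod 2) (ZMod 2) (Stmt12.Sig r k i0)).finrank_eq,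
      Module.finrank_pi, Stmt12.card_sig hr i0]
  · rw [if_neg hkb]
    have htop := Stmt12.bdries_eq_top (r := r) (b := b) (k := k) (by omega) i0
    haveI : Subsingleton (↥(cycles r b k) ⧸ bdries r b k) :=
      Submodule.Quotient.subsingleton_iff.mpr htop
    exact Module.finrank_zero_of_subsingleton
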